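/- Let u, ũ : ℝ³ → ℂ be smooth functions of (x,y,t), each satisfying the linear PDE F_{xt} + F_{xxxx} - 3F_{yy} = 0. Then the divergence identity holds: ∂/∂t (u_x·ũ_x) + ∂/∂x (ũ_x·u_{xxx} + u_x·ũ_{xxx} - ũ_{xx}·u_{xx} + 3·ũ_y·u_y) - 3·∂/∂y (ũ_x·u_y + u_x·ũ_y) = 0. -/

import Mathlib

open Complex

/-- Partial derivative in the first (x) variable. -/
noncomputable def pX (f : ℝ → ℝ → ℝ → ℂ) : ℝ → ℝ → ℝ → ℂ :=
  fun x y t => deriv (fun x' => f x' y t) x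

/-- Partial derivative in the second (y) variable. -/
noncomputable def pY (f : ℝ → ℝ → ℝ → ℂ) : ℝ → ℝ → ℝ → ℂ :=
  fun x y t => deriv (fun y' => f x y' t) y

/-- Partial derivative in the third (t) variable. -/
noncomputable def pT (f : ℝ → ℝ → ℝ → ℂ) : ℝ → ℝ → ℝ → ℂ :=
  fun x y t => deriv (fun t' => f x y t') t

namespace DivHelper

/-- Uncurried version of a function of three real variables. -/
def uc (f : ℝ → ℝ → ℝ → ℂ) : ℝ × ℝ × ℝ → ℂ := fun p => f p.1 p.2.1 p.2.2

/-- Smoothness of the uncurried function. -/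
def S3 (f : ℝ → ℝ → ℝ → ℂ) : Prop := ContDiff ℝ (⊤ : ℕ∞) (uc f)

noncomputable def eX : ℝ × ℝ × ℝ := (1, 0, 0)
noncomputable def eY : ℝ × ℝ × ℝ := (0, 1, 0)
noncomputable def eT : ℝ × ℝ × ℝ := (0, 0, 1)

lemma lineX (y t : ℝ) (x : ℝ) :
    HasDerivAt (fun x' : ℝ => ((x', y, t) : ℝ × ℝ × ℝ)) eX x :=
  (hasDerivAt_id x).prodMk ((hasDerivAt_const x y).prodMk (hasDerivAt_const x t))

lemma lineY (x t : ℝ) (y : ℝ) :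
    HasDerivAt (fun y' : ℝ => ((x, y', t) : ℝ × ℝ × ℝ)) eY y :=
  (hasDerivAt_const y x).prodMk ((hasDerivAt_id y).prodMk (hasDerivAt_const y t))

lemma lineT (x y : ℝ) (t : ℝ) :
    HasDerivAt (fun t' : ℝ => ((x, y, t') : ℝ × ℝ × ℝ)) eT t :=
  (hasDerivAt_const t x).prodMk ((hasDerivAt_const t y).prodMk (hasDerivAt_id t))

variable {f : ℝ → ℝ → ℝ → ℂ}

lemma hasDerivAt_sliceX (h : S3 f) (x y t : ℝ) :
    HasDerivAt (fun x' => f x' y t) (fderiv ℝ (uc f) (x, y, t) eX) x :=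
  by exact ((h.differentiable (by simp) (x, y, t)).hasFDerivAt).comp_hasDerivAt x (lineX y t x)

lemma hasDerivAt_sliceY (h : S3 f) (x y t : ℝ) :
    HasDerivAt (fun y' => f x y' t) (fderiv ℝ (uc f) (x, y, t) eY) y :=
  by exact ((h.differentiable (by simp) (x, y, t)).hasFDerivAt).comp_hasDerivAt y (lineY x t y)

lemma hasDerivAt_sliceT (h : S3 f) (x y t : ℝ) :
    HasDerivAt (fun t' => f x y t') (fderiv ℝ (uc f) (x, y, t) eT) t :=
  by exact ((h.differentiable (by simp) (x, y, t)).hasFDerivAt).comp_hasDerivAt t (lineT x y t)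

lemma pX_eq (h : S3 f) (x y t : ℝ) :
    pX f x y t = fderiv ℝ (uc f) (x, y, t) eX := (hasDerivAt_sliceX h x y t).deriv

lemma pY_eq (h : S3 f) (x y t : ℝ) :
    pY f x y t = fderiv ℝ (uc f) (x, y, t) eY := (hasDerivAt_sliceY h x y t).deriv

lemma pT_eq (h : S3 f) (x y t : ℝ) :
    pT f x y t = fderiv ℝ (uc f) (x, y, t) eT := (hasDerivAt_sliceT h x y t).deriv

lemma hasDerivAt_pX (h : S3 f) (x y t : ℝ) :
    HasDerivAt (fun x' => f x' y t) (pX f x y t) x := by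
  rw [pX_eq h]; exact hasDerivAt_sliceX h x y t

lemma hasDerivAt_pY (h : S3 f) (x y t : ℝ) :
    HasDerivAt (fun y' => f x y' t) (pY f x y t) y := by
  rw [pY_eq h]; exact hasDerivAt_sliceY h x y t

lemma hasDerivAt_pT (h : S3 f) (x y t : ℝ) :
    HasDerivAt (fun t' => f x y t') (pT f x y t) t := by
  rw [pT_eq h]; exact hasDerivAt_sliceT h x y t

lemma uc_deriv_eq (h : S3 f) (e : ℝ × ℝ × ℝ)
    (g : ℝ → ℝ → ℝ → ℂ) (hg : ∀ x y t, g x y t = fderiv ℝ (uc f) (x, y, t) e) :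
    uc g = fun p => fderiv ℝ (uc f) p e :=
  funext fun p => hg p.1 p.2.1 p.2.2

lemma S3_of_deriv (h : S3 f) (e : ℝ × ℝ × ℝ)
    (g : ℝ → ℝ → ℝ → ℂ) (hg : ∀ x y t, g x y t = fderiv ℝ (uc f) (x, y, t) e) :
    S3 g := by
  unfold S3
  rw [uc_deriv_eq h e g hg]
  exact (ContinuousLinearMap.apply ℝ ℂ e).contDiff.comp (h.fderiv_right (m := (⊤ : ℕ∞)) (by simp))

lemma S3_pX (h : S3 f) : S3 (pX f) := S3_of_deriv h eX (pX f) (pX_eq h)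
lemma S3_pY (h : S3 f) : S3 (pY f) := S3_of_deriv h eY (pY f) (pY_eq h)
lemma S3_pT (h : S3 f) : S3 (pT f) := S3_of_deriv h eT (pT f) (pT_eq h)

/-- Second-derivative computation: derivative of `p ↦ fderiv F p e` in direction `e'`. -/
lemma fderiv_dir (h : S3 f) (e e' : ℝ × ℝ × ℝ) (p : ℝ × ℝ × ℝ) :
    fderiv ℝ (fun q => fderiv ℝ (uc f) q e) p e' =
      fderiv ℝ (fderiv ℝ (uc f)) p e' e := by
  have hd : HasFDerivAt (fderiv ℝ (uc f)) (fderiv ℝ (fderiv ℝ (uc f)) p) p :=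
    (((h.fderiv_right (m := (⊤ : ℕ∞)) (by simp)).differentiable (by simp)) p).hasFDerivAt
  have hc : HasFDerivAt (fun q => fderiv ℝ (uc f) q e)
      ((ContinuousLinearMap.apply ℝ ℂ e).comp (fderiv ℝ (fderiv ℝ (uc f)) p)) p :=
    (ContinuousLinearMap.apply ℝ ℂ e).hasFDerivAt.comp p hd
  rw [hc.fderiv]; rfl

/-- Clairaut for the first two variables. -/
lemma swapXY (h : S3 f) (x y t : ℝ) : pX (pY f) x y t = pY (pX f) x y t := by
  rw [pX_eq (S3_pY h), pY_eq (S3_pX h),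
    uc_deriv_eq h eY (pY f) (pY_eq h), uc_deriv_eq h eX (pX f) (pX_eq h),
    fderiv_dir h eY eX, fderiv_dir h eX eY]
  exact second_derivative_symmetric
    (fun q => ((h.differentiable (by simp)) q).hasFDerivAt)
    ((((h.fderiv_right (m := (⊤ : ℕ∞)) (by simp)).differentiable (by simp)) (x, y, t)).hasFDerivAt) eX eY

end DivHelper

open DivHelper in
/-- if smooth u, ũ both satisfy F_{xt} + F_{xxxx} - 3F_{yy} = 0, then
(u_x ũ_x)_t + (ũ_x u_{xxx} + u_x ũ_{xxx} - ũ_{xx} u_{xx} + 3 ũ_y u_y)_x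
  - 3 (ũ_x u_y + u_x ũ_y)_y = 0. -/
theorem divergence_identity (u v : ℝ → ℝ → ℝ → ℂ)
    (hu : ContDiff ℝ (⊤ : ℕ∞) (fun p : ℝ × ℝ × ℝ => u p.1 p.2.1 p.2.2))
    (hv : ContDiff ℝ (⊤ : ℕ∞) (fun p : ℝ × ℝ × ℝ => v p.1 p.2.1 p.2.2))
    (hueq : ∀ x y t, pT (pX u) x y t + pX (pX (pX (pX u))) x y t
        - 3 * pY (pY u) x y t = 0)
    (hveq : ∀ x y t, pT (pX v) x y t + pX (pX (pX (pX v))) x y t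
        - 3 * pY (pY v) x y t = 0) :
    ∀ x y t,
      pT (fun a b c => pX u a b c * pX v a b c) x y t
        + pX (fun a b c => pX v a b c * pX (pX (pX u)) a b c
            + pX u a b c * pX (pX (pX v)) a b c
            - pX (pX v) a b c * pX (pX u) a b c
            + 3 * pY v a b c * pY u a b c) x y t
        - 3 * pY (fun a b c => pX v a b c * pY u a b c
            + pX u a b c * pY v a b c) x y t = 0 := by
  intro x y t
  have hu' : S3 u := hu
  have hv' : S3 v := hv
  -- smoothness of all derivatives used
  have hu1 := S3_pX hu'
  have hu2 := S3_pX hu1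
  have hu3 := S3_pX hu2
  have hv1 := S3_pX hv'
  have hv2 := S3_pX hv1
  have hv3 := S3_pX hv2
  have huY := S3_pY hu'
  have hvY := S3_pY hv'
  -- expand the time derivative
  have hT : pT (fun a b c => pX u a b c * pX v a b c) x y t =
      pT (pX u) x y t * pX v x y t + pX u x y t * pT (pX v) x y t :=
    ((hasDerivAt_pT hu1 x y t).mul (hasDerivAt_pT hv1 x y t)).deriv
  -- expand the x derivative
  have hX : pX (fun a b c => pX v a b c * pX (pX (pX u)) a b c
        + pX u a b c * pX (pX (pX v)) a b c
        - pX (pX v) a b c * pX (pX u) a b c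
        + 3 * pY v a b c * pY u a b c) x y t =
      ((pX (pX v) x y t * pX (pX (pX u)) x y t
          + pX v x y t * pX (pX (pX (pX u))) x y t
        + (pX (pX u) x y t * pX (pX (pX v)) x y t
          + pX u x y t * pX (pX (pX (pX v))) x y t))
        - (pX (pX (pX v)) x y t * pX (pX u) x y t
          + pX (pX v) x y t * pX (pX (pX u)) x y t))
        + ((3 * pX (pY v) x y t) * pY u x y t
          + 3 * pY v x y t * pX (pY u) x y t) :=
    (((((hasDerivAt_pX hv1 x y t).mul (hasDerivAt_pX hu3 x y t)).add
        ((hasDerivAt_pX hu1 x y t).mul (hasDerivAt_pX hv3 x y t))).sub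
        ((hasDerivAt_pX hv2 x y t).mul (hasDerivAt_pX hu2 x y t))).add
        (((hasDerivAt_pX hvY x y t).const_mul (3 : ℂ)).mul
          (hasDerivAt_pX huY x y t))).deriv
  -- expand the y derivative
  have hY : pY (fun a b c => pX v a b c * pY u a b c
        + pX u a b c * pY v a b c) x y t =
      (pY (pX v) x y t * pY u x y t + pX v x y t * pY (pY u) x y t)
        + (pY (pX u) x y t * pY v x y t + pX u x y t * pY (pY v) x y t) :=
    (((hasDerivAt_pY hv1 x y t).mul (hasDerivAt_pY huY x y t)).add
      ((hasDerivAt_pY hu1 x y t).mul (hasDerivAt_pY hvY x y t))).deriv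
  rw [hT, hX, hY, swapXY hu' x y t, swapXY hv' x y t]
  have eu := hueq x y t
  have ev := hveq x y t
  linear_combination pX v x y t * eu + pX u x y t * ev
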